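/- arXiv:2404.05177 — 4 statements merged into one kernel-verified Lean document; each statement's English description precedes it below -/
import Mathlib

section
/- (Graeffe halving step) Let P, Q ∈ A[[x]] with Q(0) invertible, and let N ≥ 0. Define V by V(x^2) = Q(x)Q(-x) and let U(x) = P(x)Q(-x) with even/odd parts U_e, U_o (i.e., U(x) = U_e(x^2) + x U_o(x^2)). Then [x^N](P(x)/Q(x)) equals [x^{N/2}](U_e(x)/V(x)) if N is even, and [x^{(N-1)/2}](U_o(x)/V(x)) if N is odd. -/
/-!
Writing `U(x) = P(x)Q(-x)`, we have `1/Q(x) = Q(-x)/(Q(x)Q(-x)) = Q(-x) · (1/V)(x²)`,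
so `P/Q = U(x) · (1/V)(x²)`. Splitting `U(x) = U_e(x²) + x U_o(x²)` gives
`P/Q = (U_e/V)(x²) + x (U_o/V)(x²)`, whose even coefficients are those of `U_e/V` and whose odd
ones are those of `U_o/V`.
-/

/-- Substitution `x ↦ x²` on formal power series, defined coefficientwise. -/
noncomputable def sqSubst {R : Type*} [CommRing R] (W : PowerSeries R) : PowerSeries R :=
  PowerSeries.mk fun n => if n % 2 = 0 then PowerSeries.coeff (n / 2) W else 0

/-- Even part: `U_e(x) = Σ_i ([x^{2i}]U) x^i`. -/
noncomputable def evenPart {R : Type*} [CommRing R] (U : PowerSeries R) : PowerSeries R :=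
  PowerSeries.mk fun n => PowerSeries.coeff (2 * n) U

/-- Odd part: `U_o(x) = Σ_i ([x^{2i+1}]U) x^i`. -/
noncomputable def oddPart {R : Type*} [CommRing R] (U : PowerSeries R) : PowerSeries R :=
  PowerSeries.mk fun n => PowerSeries.coeff (2 * n + 1) U

namespace PowerSeries

variable {R : Type*} [CommRing R]

theorem sqSubst_eq_expand (W : R⟦X⟧) : sqSubst W = expand 2 two_ne_zero W := by
  ext n
  simp only [sqSubst, coeff_mk, coeff_expand, Nat.dvd_iff_mod_eq_zero]

theorem coeff_two_mul_X_mul_expand_two (G : R⟦X⟧) (m : ℕ) :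
    coeff (2 * m) (X * expand 2 two_ne_zero G) = 0 := by
  rcases m with _ | m
  · simp
  · rw [show 2 * (m + 1) = (2 * m + 1) + 1 by ring, coeff_succ_X_mul,
      coeff_expand_of_not_dvd _ _ _ (by omega)]

theorem expand_evenPart_add_X_mul_expand_oddPart (U : R⟦X⟧) :
    expand 2 two_ne_zero (evenPart U) + X * expand 2 two_ne_zero (oddPart U) = U := by
  ext n
  rcases n.even_or_odd' with ⟨m, rfl | rfl⟩
  · simp [coeff_two_mul_X_mul_expand_two, evenPart]
  · simp [coeff_succ_X_mul, coeff_expand_of_not_dvd _ _ _ (by omega : ¬2 ∣ 2 * m + 1), oddPart]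

theorem mul_expand_two (U W : R⟦X⟧) :
    U * expand 2 two_ne_zero W = expand 2 two_ne_zero (evenPart U * W) +
      X * expand 2 two_ne_zero (oddPart U * W) := by
  conv_lhs => rw [← expand_evenPart_add_X_mul_expand_oddPart U]
  simp only [map_mul]
  ring

theorem coeff_two_mul_mul_expand_two (U W : R⟦X⟧) (m : ℕ) :
    coeff (2 * m) (U * expand 2 two_ne_zero W) = coeff m (evenPart U * W) := by
  rw [mul_expand_two, map_add, coeff_expand_mul, coeff_two_mul_X_mul_expand_two, add_zero]

theorem coeff_two_mul_add_one_mul_expand_two (U W : R⟦X⟧) (m : ℕ) :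
    coeff (2 * m + 1) (U * expand 2 two_ne_zero W) = coeff m (oddPart U * W) := by
  rw [mul_expand_two, map_add, coeff_succ_X_mul, coeff_expand_mul,
    coeff_expand_of_not_dvd _ _ _ (by omega), zero_add]

end PowerSeries

open PowerSeries

theorem graeffe_halving_step_general
    {A : Type*} [CommRing A] (P Q : PowerSeries A)
    (N : ℕ)
    (Qinv : PowerSeries A) (hQinv : Q * Qinv = 1)
    (V : PowerSeries A) (hV : sqSubst V = Q * PowerSeries.rescale (-1) Q)
    (Vinv : PowerSeries A) (hVinv : V * Vinv = 1) :
    PowerSeries.coeff N (P * Qinv) =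
      if N % 2 = 0 then
        PowerSeries.coeff (N / 2) (evenPart (P * PowerSeries.rescale (-1) Q) * Vinv)
      else
        PowerSeries.coeff ((N - 1) / 2) (oddPart (P * PowerSeries.rescale (-1) Q) * Vinv) := by
  rw [sqSubst_eq_expand] at hV
  have hQinv_eq : Qinv = rescale (-1) Q * expand 2 two_ne_zero Vinv := by
    refine left_inv_eq_right_inv (a := Q) (by rw [mul_comm, hQinv]) ?_
    rw [← mul_assoc, ← hV, ← map_mul, hVinv, map_one]
  rw [hQinv_eq, ← mul_assoc]
  split_ifs with hN
  · rw [← coeff_two_mul_mul_expand_two, Nat.two_mul_div_two_of_even (Nat.even_iff.mpr hN)]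
  · rw [← coeff_two_mul_add_one_mul_expand_two, show 2 * ((N - 1) / 2) + 1 = N by omega]

/-- Graeffe halving step: with `V(x²) = Q(x)Q(-x)`, `U = P(x)Q(-x)`,
`[x^N](P/Q)` equals `[x^{N/2}](U_e/V)` if `N` is even, `[x^{(N-1)/2}](U_o/V)` if odd. -/
theorem graeffe_halving_step
    {A : Type*} [CommRing A] (P Q : PowerSeries A)
    (hQ0 : IsUnit (PowerSeries.constantCoeff Q)) (N : ℕ)
    (Qinv : PowerSeries A) (hQinv : Q * Qinv = 1)
    (V : PowerSeries A) (hV : sqSubst V = Q * PowerSeries.rescale (-1) Q)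
    (Vinv : PowerSeries A) (hVinv : V * Vinv = 1) :
    PowerSeries.coeff N (P * Qinv) =
      if N % 2 = 0 then
        PowerSeries.coeff (N / 2) (evenPart (P * PowerSeries.rescale (-1) Q) * Vinv)
      else
        PowerSeries.coeff ((N - 1) / 2) (oddPart (P * PowerSeries.rescale (-1) Q) * Vinv) :=
  graeffe_halving_step_general P Q N Qinv hQinv V hV Vinv hVinv
end

section
/- (Power projection as rational coefficient extraction) Let g ∈ A[x] with deg g < n, let w_0,…,w_{n-1} ∈ A define the linear form w(Σ a_j x^j) = Σ_{j<n} w_j a_j, and set w^R(x) = Σ_{j=0}^{n-1} w_{n-1-j} x^j. Then for every i ≥ 0, w(g(x)^i mod x^n) = [x^{n-1}](w^R(x) · g(x)^i). Hence Σ_{i=0}^{m-1} w(g(x)^i mod x^n) y^i = ([x^{n-1}] (w^R(x)/(1 - y g(x)))) mod y^m. -/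
/-!
Pairing `w` with the first `n` coefficients of `g ^ i` is the same as reading off the
`x ^ (n - 1)` coefficient of `w^R · g ^ i`, because multiplying by the reversal `w^R` pairs
`w_j` with the coefficient of `x ^ j` exactly at degree `n - 1`. Summing over `i` with weights
`y ^ i`, the geometric series `∑ g ^ i y ^ i` is the inverse of `1 - y g` in `A[x][[y]]`.
-/

open Polynomial in
theorem Polynomial.coeff_sum_C_mul_X_pow_reverse_mul {R : Type*} [Semiring R] (n : ℕ)
    (w : ℕ → R) (p : R[X]) :
    ((∑ j ∈ Finset.range n, C (w (n - 1 - j)) * X ^ j) * p).coeff (n - 1) =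
      ∑ j ∈ Finset.range n, w j * p.coeff j := by
  rw [Finset.sum_mul, finsetSum_coeff, ← Finset.sum_range_reflect _ n]
  refine Finset.sum_congr rfl fun j hj => ?_
  rw [Finset.mem_range] at hj
  rw [mul_assoc, coeff_C_mul, coeff_X_pow_mul', if_pos (by omega), Nat.sub_sub_self (by omega)]

open Polynomial in
theorem Polynomial.sum_range_mul_coeff_trunc_coe {R : Type*} [Semiring R] (n : ℕ) (w : ℕ → R)
    (p : R[X]) :
    ∑ j ∈ Finset.range n, w j * (PowerSeries.trunc n (p : PowerSeries R)).coeff j =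
      ∑ j ∈ Finset.range n, w j * p.coeff j := by
  refine Finset.sum_congr rfl fun j hj => ?_
  rw [PowerSeries.coeff_trunc, if_pos (Finset.mem_range.mp hj), coeff_coe]

theorem PowerSeries.mk_pow_mul_one_sub_X_mul_C {R : Type*} [CommRing R] (a : R) :
    mk (a ^ ·) * (1 - X * C a) = 1 := by
  simpa [rescale_mk, rescale_X, mul_comm] using
    congrArg (rescale a) (mk_one_mul_one_sub_eq_one R)

theorem PowerSeries.inverse_one_sub_X_mul_C {R : Type*} [CommRing R] (a : R) :
    Ring.inverse (1 - X * C a) = mk (a ^ ·) := by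
  have h := mk_pow_mul_one_sub_X_mul_C a
  have hu : IsUnit (1 - X * C a) := IsUnit.of_mul_eq_one_right _ h
  simpa using (Ring.inverse_mul_eq_iff_eq_mul _ 1 _ hu).mpr (by rw [mul_comm, h])

theorem power_projection_as_coeff_general
    {A : Type*} [CommRing A] (n m : ℕ)
    (g : Polynomial A) (w : ℕ → A) :
    (∀ i : ℕ,
        (∑ j ∈ Finset.range n,
            w j * (PowerSeries.trunc n ((g : PowerSeries A) ^ i)).coeff j) =
          ((∑ j ∈ Finset.range n, Polynomial.C (w (n - 1 - j)) * Polynomial.X ^ j) *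
              g ^ i).coeff (n - 1)) ∧
      ∀ i < m,
        ((PowerSeries.coeff (R := Polynomial A) i
              (PowerSeries.C (R := Polynomial A)
                  (∑ j ∈ Finset.range n, Polynomial.C (w (n - 1 - j)) * Polynomial.X ^ j) *
                Ring.inverse
                  (1 - PowerSeries.X * PowerSeries.C (R := Polynomial A) g))).coeff (n - 1)) =
          ∑ j ∈ Finset.range n,
            w j * (PowerSeries.trunc n ((g : PowerSeries A) ^ i)).coeff j := by
  have projection (i : ℕ) :
      ∑ j ∈ Finset.range n, w j * (PowerSeries.trunc n ((g : PowerSeries A) ^ i)).coeff j =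
        ((∑ j ∈ Finset.range n, Polynomial.C (w (n - 1 - j)) * Polynomial.X ^ j) *
          g ^ i).coeff (n - 1) := by
    rw [← Polynomial.coe_pow, Polynomial.sum_range_mul_coeff_trunc_coe,
      Polynomial.coeff_sum_C_mul_X_pow_reverse_mul]
  refine ⟨projection, fun i _ => ?_⟩
  rw [PowerSeries.inverse_one_sub_X_mul_C, PowerSeries.coeff_C_mul, PowerSeries.coeff_mk,
    projection]

/-- Power projection as rational coefficient extraction:
for `g` of degree `< n` and the linear form `w`, with `w^R(x) = Σ_{j<n} w_{n-1-j} x^j`,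
`w(g^i mod x^n) = [x^{n-1}](w^R · g^i)` for all `i`; hence for `i < m` the coefficient
of `y^i` in `[x^{n-1}](w^R/(1 - y g))` is `w(g^i mod x^n)`. -/
theorem power_projection_as_coeff
    {A : Type*} [CommRing A] (n m : ℕ) (hn : 1 ≤ n)
    (g : Polynomial A) (hg : g.natDegree < n) (w : ℕ → A) :
    (∀ i : ℕ,
        (∑ j ∈ Finset.range n,
            w j * (PowerSeries.trunc n ((g : PowerSeries A) ^ i)).coeff j) =
          ((∑ j ∈ Finset.range n, Polynomial.C (w (n - 1 - j)) * Polynomial.X ^ j) *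
              g ^ i).coeff (n - 1)) ∧
      ∀ i < m,
        ((PowerSeries.coeff (R := Polynomial A) i
              (PowerSeries.C (R := Polynomial A)
                  (∑ j ∈ Finset.range n, Polynomial.C (w (n - 1 - j)) * Polynomial.X ^ j) *
                Ring.inverse
                  (1 - PowerSeries.X * PowerSeries.C (R := Polynomial A) g))).coeff (n - 1)) =
          ∑ j ∈ Finset.range n,
            w j * (PowerSeries.trunc n ((g : PowerSeries A) ^ i)).coeff j :=
  power_projection_as_coeff_general n m g w
end

section
/- (Composition as coefficient extraction) Let f ∈ A[y] with deg f < m and g ∈ A[x]. Set P(y) = y^{m-1} f(1/y) (the degree-(m-1) reversal of f). Then f(g(x)) mod x^n = ([y^{m-1}] (P(y)/(1 - y g(x)))) mod x^n, where the quotient is taken in A[x][[y]]. -/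
/-!
Expanding `1 / (1 - y g)` as the geometric series `∑ⱼ gʲ yʲ`, the coefficient of `y^(m-1)` in
`fᵢ y^(m-1-i) / (1 - y g)` is `fᵢ gⁱ`, so the coefficient of `y^(m-1)` in `P(y) / (1 - y g)` is
`∑ᵢ fᵢ gⁱ = f(g)`.
-/

open Finset

namespace PowerSeries

variable {R : Type*} [CommRing R]

theorem one_sub_X_mul_C_mul_mk_pow (a : R) : (1 - X * C a) * mk (a ^ ·) = 1 := by
  simpa [rescale_mk, rescale_X, mul_comm] using congrArg (rescale a) (mk_one_mul_one_sub_eq_one R)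

theorem inverse_one_sub_X_mul_C_s8 (a : R) : Ring.inverse (1 - X * C a) = mk (a ^ ·) :=
  Ring.inverse_unit (Units.mkOfMulEqOne _ _ (one_sub_X_mul_C_mul_mk_pow a))

theorem coeff_C_mul_X_pow_sub_mul_mk_pow {i d : ℕ} (hi : i ≤ d) (c a : R) :
    coeff d (C c * X ^ (d - i) * mk (a ^ ·)) = c * a ^ i := by
  obtain ⟨e, rfl⟩ := Nat.exists_eq_add_of_le hi
  rw [Nat.add_sub_cancel_left, mul_assoc, coeff_C_mul, coeff_X_pow_mul, coeff_mk]

theorem coeff_sum_C_mul_X_pow_mul_inverse_one_sub_X_mul_C {A : Type*} [CommRing A] (φ : A →+* R)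
    (a : R) {f : Polynomial A} {m : ℕ} (hf : f.natDegree < m) :
    coeff (m - 1) ((∑ i ∈ range m, C (φ (f.coeff i)) * X ^ (m - 1 - i)) *
      Ring.inverse (1 - X * C a)) = f.eval₂ φ a := by
  rw [inverse_one_sub_X_mul_C_s8, sum_mul, map_sum, Polynomial.eval₂_eq_sum_range' φ hf]
  refine sum_congr rfl fun i hi => ?_
  exact coeff_C_mul_X_pow_sub_mul_mk_pow (Nat.le_sub_one_of_lt (mem_range.mp hi)) _ _

end PowerSeries

theorem composition_as_coeff_general
    {A : Type*} [CommRing A] (n m : ℕ)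
    (f g : Polynomial A) (hf : f.natDegree < m) :
    ∀ k < n,
      (f.comp g).coeff k =
        ((PowerSeries.coeff (R := Polynomial A) (m - 1)
              ((∑ i ∈ Finset.range m,
                  PowerSeries.C (R := Polynomial A) (Polynomial.C (f.coeff i)) *
                    PowerSeries.X ^ (m - 1 - i)) *
                Ring.inverse
                  (1 - PowerSeries.X * PowerSeries.C (R := Polynomial A) g))).coeff k) := by
  intro k _
  rw [PowerSeries.coeff_sum_C_mul_X_pow_mul_inverse_one_sub_X_mul_C Polynomial.C g hf]
  rfl

/-- Composition as coefficient extraction: for `f` of degree `< m`,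
`g ∈ A[x]`, and `P(y) = Σ_{i<m} ([y^i]f) y^{m-1-i}` the degree-`(m-1)` reversal of `f`,
we have `f(g(x)) mod x^n = ([y^{m-1}](P(y)/(1 - y g(x)))) mod x^n` in `A[x]⟦y⟧`. -/
theorem composition_as_coeff
    {A : Type*} [CommRing A] (n m : ℕ) (hm : 1 ≤ m)
    (f g : Polynomial A) (hf : f.natDegree < m) :
    ∀ k < n,
      (f.comp g).coeff k =
        ((PowerSeries.coeff (R := Polynomial A) (m - 1)
              ((∑ i ∈ Finset.range m,
                  PowerSeries.C (R := Polynomial A) (Polynomial.C (f.coeff i)) *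
                    PowerSeries.X ^ (m - 1 - i)) *
                Ring.inverse
                  (1 - PowerSeries.X * PowerSeries.C (R := Polynomial A) g))).coeff k) :=
  composition_as_coeff_general n m f g hf
end

section
/- If a function M: ℕ → ℝ≥0 is nondecreasing and superadditive (M(a) + M(b) ≤ M(a+b)), then Σ_{i=0}^{⌊log₂ n⌋} M(⌈n/2^i⌉) ≤ C·M(n) for a universal constant C (e.g., C = 4) and all n ≥ 1. -/
/-!
Superadditivity gives `k • M m ≤ M (k * m)`. Since `2 ^ (i - 1) * ⌈n / 2 ^ i⌉ ≤ n` for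
`1 ≤ 2 ^ i ≤ n`, monotonicity turns this into `M ⌈n / 2 ^ i⌉ ≤ 2 * M n / 2 ^ i`, and the
geometric series `∑ 2⁻ⁱ` is at most `2`, so `C = 4` works.
-/

open Finset

theorem nsmul_le_of_superadditive {α β : Type*} [AddMonoid α] [AddCommMonoid β] [PartialOrder β]
    [IsOrderedAddMonoid β] {M : α → β} (hM : ∀ a b, M a + M b ≤ M (a + b)) (hM₀ : 0 ≤ M 0)
    (k : ℕ) (a : α) : k • M a ≤ M (k • a) := by
  induction k with
  | zero => simpa using hM₀
  | succ k ih =>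
    calc (k + 1) • M a = k • M a + M a := succ_nsmul _ _
      _ ≤ M (k • a) + M a := by gcongr
      _ ≤ M ((k + 1) • a) := by rw [succ_nsmul]; exact hM _ _

theorem mul_ceil_div_two_mul_le {d n : ℕ} (h : 2 * d ≤ n + 1) :
    d * ((n + 2 * d - 1) / (2 * d)) ≤ n := by
  have hq := Nat.div_mul_le_self (n + 2 * d - 1) (2 * d)
  have : 2 * (d * ((n + 2 * d - 1) / (2 * d))) ≤ n + 2 * d - 1 := by linarith
  omega

theorem two_pow_mul_apply_ceil_div_le {M : ℕ → NNReal} (hmono : Monotone M)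
    (hM : ∀ a b, M a + M b ≤ M (a + b)) {n i : ℕ} (hi : 2 ^ i ≤ n) :
    2 ^ i * M ((n + 2 ^ i - 1) / 2 ^ i) ≤ 2 * M n := by
  cases i with
  | zero => simpa using le_mul_of_one_le_left zero_le one_le_two
  | succ j =>
    simp only [pow_succ'] at hi ⊢
    set q := (n + 2 * 2 ^ j - 1) / (2 * 2 ^ j)
    have hq : 2 ^ j * q ≤ n := mul_ceil_div_two_mul_le (by omega)
    have : (2 : NNReal) ^ j * M q ≤ M n := by
      simpa using (nsmul_le_of_superadditive hM zero_le (2 ^ j) q).trans (hmono hq)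
    calc (2 : NNReal) * 2 ^ j * M q = 2 * (2 ^ j * M q) := by ring
      _ ≤ 2 * M n := by gcongr

/-- Brent–Kung geometric-series lemma: if `M : ℕ → ℝ≥0` is nondecreasing
and superadditive, then `Σ_{i=0}^{⌊log₂ n⌋} M(⌈n/2^i⌉) ≤ C·M(n)` for a universal
constant `C` and all `n ≥ 1`. -/
theorem geometric_series_lemma :
    ∃ C : NNReal, ∀ M : ℕ → NNReal,
      Monotone M →
      (∀ a b : ℕ, M a + M b ≤ M (a + b)) →
      ∀ n : ℕ, 1 ≤ n →
        (∑ i ∈ Finset.range (Nat.log 2 n + 1), M ((n + 2 ^ i - 1) / 2 ^ i)) ≤ C * M n := by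
  refine ⟨4, fun M hmono hM n hn => ?_⟩
  have hterm : ∀ i ∈ range (Nat.log 2 n + 1),
      M ((n + 2 ^ i - 1) / 2 ^ i) ≤ 2 * M n * (1 / 2) ^ i := by
    intro i hi
    have h2i : 2 ^ i ≤ n := Nat.pow_le_of_le_log (by omega) (Nat.lt_succ_iff.mp (mem_range.mp hi))
    rw [div_pow, one_pow, mul_one_div, le_div_iff₀ (by positivity), mul_comm]
    exact two_pow_mul_apply_ceil_div_le hmono hM h2i
  have hgeom : ∑ i ∈ range (Nat.log 2 n + 1), (1 / 2 : NNReal) ^ i ≤ 2 := by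
    rw [← NNReal.coe_le_coe]
    push_cast
    exact sum_geometric_two_le _
  calc _ ≤ ∑ i ∈ range (Nat.log 2 n + 1), 2 * M n * (1 / 2) ^ i := sum_le_sum hterm
    _ = 2 * M n * ∑ i ∈ range (Nat.log 2 n + 1), (1 / 2 : NNReal) ^ i := (mul_sum ..).symm
    _ ≤ 2 * M n * 2 := by gcongr
    _ = 4 * M n := by ring
end
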